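/- arXiv:1907.07822 — 4 statements merged into one kernel-verified Lean document; each statement's English description precedes it below -/
import Mathlib

section
/- Let A be a ℂ-algebra graded by ℤ/nℤ, let ζ be a primitive n-th root of unity, let m divide n and set q = ζ^{n/m}. Fix c ∈ A homogeneous of degree n/m. Define the skew commutator operator D(a) = c·a − ζ^{|a|}·a·c on homogeneous elements a (extended linearly). Then for every homogeneous a ∈ A, the m-fold iterate satisfies D^m(a) = c^m·a − ζ^{m|a|}·a·c^m. -/
open Polynomial in
lemma skew_key' {T : Type*} [CommRing T] [Algebra ℂ T] {m : ℕ} (hm : 0 < m) {q : ℂ}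
    (hq : IsPrimitiveRoot q m) (β : ℂ) (u w : T) :
    ∏ i ∈ Finset.range m, (u - (β * q ^ i) • w) = u ^ m - (β ^ m) • w ^ m := by
  classical
  have hC : Function.Injective (Polynomial.C : ℂ → Polynomial ℂ) := Polynomial.C_injective
  have hq' : IsPrimitiveRoot (Polynomial.C q) m := hq.map_of_injective hC
  have hid := X_pow_sub_C_eq_prod (R := Polynomial ℂ) hq' hm
    (rfl : (Polynomial.C β * Polynomial.X) ^ m = (Polynomial.C β * Polynomial.X) ^ m)
  have h2 := congrArg (Polynomial.eval₂RingHom ((Polynomial.aeval w).toRingHom) u) hid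
  simp only [map_sub, map_pow, map_prod, map_mul, Polynomial.coe_eval₂RingHom,
    Polynomial.eval₂_X, Polynomial.eval₂_C, AlgHom.toRingHom_eq_coe, RingHom.coe_coe,
    Polynomial.aeval_X, Polynomial.aeval_C] at h2
  have e1 : ∀ i : ℕ, (β * q ^ i) • w = (algebraMap ℂ T) q ^ i * ((algebraMap ℂ T) β * w) := by
    intro i; rw [Algebra.smul_def, map_mul, map_pow]; ring
  have e2 : (β ^ m) • w ^ m = ((algebraMap ℂ T) β * w) ^ m := by
    rw [Algebra.smul_def, map_pow, mul_pow]
  simp_rw [e1, e2]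
  exact h2.symm

/-- The `k`-fold iterate of the skew commutator `D(x) = c·x − ζ^{deg}·x·c`, applied to a
homogeneous element `a` of degree `d`, where `c` has degree `s` (so the `k`-th application
uses the scalar `ζ^{d + k·s}`). -/
def skewIter {A : Type*} [Ring A] [Algebra ℂ A] (c : A) (ζ : ℂ) (d s : ℕ) (a : A) : ℕ → A
  | 0 => a
  | k + 1 => c * skewIter c ζ d s a k - ζ ^ (d + k * s) • (skewIter c ζ d s a k * c)

/-- Let `A` be a `ℤ/nℤ`-graded `ℂ`-algebra, `ζ` a primitive `n`-th root of unity, `m ∣ n`,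
`q = ζ^{n/m}`, and `c` homogeneous of degree `n/m`.  For a homogeneous element `a` of degree
`d`, the `m`-fold iterate of the skew commutator `D(a) = ca − ζ^{|a|}ac` satisfies
`D^m(a) = c^m·a − ζ^{m·d}·a·c^m`. -/
theorem stmt4 {A : Type*} [Ring A] [Algebra ℂ A] (n m : ℕ) (hn : 0 < n) (hm : 0 < m)
    (hmn : m ∣ n) (ζ : ℂ) (hζ : IsPrimitiveRoot ζ n) (c a : A) (d : ℕ) :
    skewIter c ζ d (n / m) a m = c ^ m * a - ζ ^ (m * d) • (a * c ^ m) := by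
  classical
  set s := n / m with hs
  set q := ζ ^ s with hqdef
  have hq : IsPrimitiveRoot q m := hζ.pow hn (Nat.div_mul_cancel hmn).symm
  set L : Module.End ℂ A := LinearMap.mulLeft ℂ c with hL
  set R : Module.End ℂ A := LinearMap.mulRight ℂ c with hR
  have hcomm : ∀ x ∈ ({L, R} : Set (Module.End ℂ A)), ∀ y ∈ ({L, R} : Set (Module.End ℂ A)), x * y = y * x := by
    have h1 : L * R = R * L := by
      ext x
      simp [hL, hR, Module.End.mul_apply, LinearMap.mulLeft_apply, LinearMap.mulRight_apply,
        mul_assoc]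
    rintro x (rfl | rfl) y (rfl | rfl) <;> simp_all
  set T := Algebra.adjoin ℂ ({L, R} : Set (Module.End ℂ A)) with hT
  letI : CommRing T := Algebra.adjoinCommRingOfComm ℂ hcomm
  set u : T := ⟨L, Algebra.subset_adjoin (by simp)⟩ with hu
  set w : T := ⟨R, Algebra.subset_adjoin (by simp)⟩ with hw
  set P : ℕ → T := fun k => ∏ i ∈ Finset.range k, (u - (ζ ^ d * q ^ i) • w) with hPdef
  have hcoe : ∀ (x y : T) (b : A), (((x * y : T) : Module.End ℂ A)) b = ((x : T) : Module.End ℂ A) (((y : T) : Module.End ℂ A) b) := by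
    intro x y b
    rw [MulMemClass.coe_mul, Module.End.mul_apply]
  have hP : ∀ k, skewIter c ζ d s a k = ((P k : T) : Module.End ℂ A) a := by
    intro k
    induction k with
    | zero =>
      simp [hPdef, skewIter, Module.End.one_apply]
    | succ k ih =>
      have hstep : P (k + 1) = (u - (ζ ^ d * q ^ k) • w) * P k := by
        simp only [hPdef]
        rw [Finset.prod_range_succ, mul_comm]
      have hz : (ζ : ℂ) ^ (d + k * s) = ζ ^ d * q ^ k := by
        rw [pow_add, hqdef, ← pow_mul, mul_comm s k]
      rw [skewIter, ih, hstep, hcoe]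
      have hsub : (((u - (ζ ^ d * q ^ k) • w : T)) : Module.End ℂ A) = L - (ζ ^ d * q ^ k) • R := by
        push_cast [hu, hw]
        rfl
      rw [hsub, hz]
      simp [hL, hR, LinearMap.sub_apply, LinearMap.smul_apply, LinearMap.mulLeft_apply,
        LinearMap.mulRight_apply]
  have hkey : P m = u ^ m - ((ζ ^ d) ^ m) • w ^ m := skew_key' hm hq (ζ ^ d) u w
  rw [hP m, hkey]
  have hsub : ((((u ^ m - ((ζ ^ d) ^ m) • w ^ m : T)) : Module.End ℂ A)) = L ^ m - ((ζ ^ d) ^ m) • R ^ m := by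
    push_cast [hu, hw]
    rfl
  rw [hsub]
  have hzm : (ζ ^ d) ^ m = ζ ^ (m * d) := by rw [← pow_mul, mul_comm]
  simp [hL, hR, hzm, LinearMap.pow_mulLeft, LinearMap.pow_mulRight, LinearMap.sub_apply,
    LinearMap.smul_apply, LinearMap.mulLeft_apply, LinearMap.mulRight_apply]
end

section
/- Let K be a field of characteristic 0, G a group acting on a K-algebra A by automorphisms with A finite-dimensional semisimple over K, and suppose A carries a G-grading compatible with the G-action (a Yetter–Drinfeld structure over an abelian group G). Then the multiplication map A ⊗_K A → A admits a bimodule splitting given by a separability idempotent e' that is homogeneous of degree 0 with respect to the grading. -/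
/-!
In characteristic `0` the trace form `(x, y) ↦ tr (L_{xy})` of a finite-dimensional semisimple
algebra is nondegenerate: a nonzero element of its radical would generate a left ideal `A e`
with `e` a nonzero idempotent, whose trace is its rank. For a basis `bᵢ` with trace-dual basis
`bᵢ'`, the Casimir element `∑ bᵢ' ⊗ bᵢ` intertwines the left and right actions of `A`, and its
product `z = ∑ bᵢ' bᵢ` is central with `tr (L_{zx}) = tr (R_x)`; the right trace form is
nondegenerate as well, so `z` is invertible and `(z⁻¹ ⊗ 1) · ∑ bᵢ' ⊗ bᵢ` is a separability
idempotent. Its degree-zero part `∑_g (π_g ⊗ π_{-g}) e` is again one, because multiplication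
by a homogeneous element of degree `c` on either side moves the degree-`d` part of `A ⊗ A` to
the degree-`(c + d)` part.
-/

open scoped TensorProduct
open LinearMap

theorem IsSemisimpleRing.eq_zero_of_forall_apply_mul_eq_zero {A M : Type*} [Ring A]
    [IsSemisimpleRing A] [Zero M] (τ : A → M) (hτ : ∀ u v, τ (u * v) = τ (v * u))
    (hidem : ∀ e, IsIdempotentElem e → τ e = 0 → e = 0) {x : A} (hx : ∀ y, τ (x * y) = 0) :
    x = 0 := by
  obtain ⟨e, he, hspan⟩ := IsSemisimpleRing.ideal_eq_span_idempotent (Ideal.span {x})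
  obtain ⟨r, hr⟩ : ∃ r, r * x = e := Ideal.mem_span_singleton'.mp <| by
    rw [hspan]; exact Ideal.mem_span_singleton_self e
  obtain ⟨s, hs⟩ : ∃ s, s * e = x := Ideal.mem_span_singleton'.mp <| by
    rw [← hspan]; exact Ideal.mem_span_singleton_self x
  have he0 : e = 0 := hidem e he (by rw [← hr, hτ, hx])
  rw [← hs, he0, mul_zero]

section TraceForm

variable (K A : Type*) [Field K] [Ring A] [Algebra K A]

theorem trace_mulLeft_mul_comm (u v : A) :
    trace K A (mulLeft K (u * v)) = trace K A (mulLeft K (v * u)) := by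
  rw [mulLeft_mul, mulLeft_mul, ← Module.End.mul_eq_comp, ← Module.End.mul_eq_comp,
    trace_mul_comm]

theorem trace_mulRight_mul_comm (u v : A) :
    trace K A (mulRight K (u * v)) = trace K A (mulRight K (v * u)) := by
  rw [mulRight_mul, mulRight_mul, ← Module.End.mul_eq_comp, ← Module.End.mul_eq_comp,
    trace_mul_comm]

variable {K A} [FiniteDimensional K A] [CharZero K]

theorem IsIdempotentElem.eq_zero_of_trace_mulLeft_eq_zero {e : A} (he : IsIdempotentElem e)
    (h : trace K A (mulLeft K e) = 0) : e = 0 :=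
  (mulLeft_eq_zero_iff K A e).mp <| (he.map (Algebra.lmul K A)).eq_zero_of_trace_eq_zero h

theorem IsIdempotentElem.eq_zero_of_trace_mulRight_eq_zero {e : A} (he : IsIdempotentElem e)
    (h : trace K A (mulRight K e) = 0) : e = 0 := by
  refine (mulRight_eq_zero_iff K A e).mp <| IsIdempotentElem.eq_zero_of_trace_eq_zero ?_ h
  rw [IsIdempotentElem, Module.End.mul_eq_comp, ← mulRight_mul, he.eq]

variable [IsSemisimpleRing A]

theorem eq_zero_of_forall_trace_mulLeft_mul_eq_zero {x : A}
    (hx : ∀ y, trace K A (mulLeft K (x * y)) = 0) : x = 0 :=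
  IsSemisimpleRing.eq_zero_of_forall_apply_mul_eq_zero _ (trace_mulLeft_mul_comm K A)
    (fun _ he => he.eq_zero_of_trace_mulLeft_eq_zero) hx

theorem eq_zero_of_forall_trace_mulRight_mul_eq_zero {x : A}
    (hx : ∀ y, trace K A (mulRight K (x * y)) = 0) : x = 0 :=
  IsSemisimpleRing.eq_zero_of_forall_apply_mul_eq_zero _ (trace_mulRight_mul_comm K A)
    (fun _ he => he.eq_zero_of_trace_mulRight_eq_zero) hx

end TraceForm

section Casimir

open LinearMap.BilinForm

variable {K A : Type*} [Field K] [Ring A] [Algebra K A]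
variable {ι : Type*} [Fintype ι] [DecidableEq ι]
variable {B : LinearMap.BilinForm K A} (hB : B.Nondegenerate) (b : Module.Basis ι K A)

theorem Module.Basis.repr_eq_apply_dualBasis (x : A) (i : ι) :
    b.repr x i = B (B.dualBasis hB b i) x := by
  conv_lhs => rw [← dualBasis_flip_dualBasis hB b]
  rw [dualBasis_repr_apply, BilinForm.flip_apply]

noncomputable def casimir : A ⊗[K] A := ∑ i, B.dualBasis hB b i ⊗ₜ b i

theorem tmul_one_mul_casimir (hBmul : ∀ a x y, B (a * x) y = B x (y * a)) (a : A) :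
    (a ⊗ₜ[K] (1 : A)) * casimir hB b = casimir hB b * ((1 : A) ⊗ₜ[K] a) := by
  set b' := B.dualBasis hB b
  simp only [casimir, Finset.mul_sum, Finset.sum_mul, Algebra.TensorProduct.tmul_mul_tmul,
    one_mul, mul_one]
  calc ∑ i, (a * b' i) ⊗ₜ[K] b i
      = ∑ i, ∑ j, B (b' i) (b j * a) • (b' j ⊗ₜ[K] b i) := by
        refine Finset.sum_congr rfl fun i _ => ?_
        conv_lhs => rw [← b'.sum_repr (a * b' i)]
        simp only [b', dualBasis_repr_apply, hBmul, TensorProduct.sum_tmul,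
          TensorProduct.smul_tmul']
    _ = ∑ j, b' j ⊗ₜ[K] (b j * a) := by
        rw [Finset.sum_comm]
        refine Finset.sum_congr rfl fun j _ => ?_
        conv_rhs => rw [← b.sum_repr (b j * a)]
        simp only [b.repr_eq_apply_dualBasis hB, TensorProduct.tmul_sum, TensorProduct.tmul_smul,
          b']

end Casimir

section Separability

variable {K A : Type*} [Field K] [Ring A] [Algebra K A]

theorem mul'_tmul_one_mul (a : A) (t : A ⊗[K] A) :
    mul' K A ((a ⊗ₜ[K] (1 : A)) * t) = a * mul' K A t := by
  induction t using TensorProduct.induction_on with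
  | zero => simp
  | tmul x y => simp [mul_assoc]
  | add u v hu hv => rw [mul_add, map_add, map_add, hu, hv, mul_add]

theorem mul'_mul_one_tmul (a : A) (t : A ⊗[K] A) :
    mul' K A (t * ((1 : A) ⊗ₜ[K] a)) = mul' K A t * a := by
  induction t using TensorProduct.induction_on with
  | zero => simp
  | tmul x y => simp [mul_assoc]
  | add u v hu hv => rw [add_mul, map_add, map_add, hu, hv, add_mul]

theorem exists_separabilityIdempotent_of_isUnit_mul' {t : A ⊗[K] A}
    (ht : ∀ a : A, (a ⊗ₜ[K] (1 : A)) * t = t * ((1 : A) ⊗ₜ[K] a)) (hu : IsUnit (mul' K A t)) :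
    ∃ e : A ⊗[K] A, mul' K A e = 1 ∧ ∀ a : A, (a ⊗ₜ[K] (1 : A)) * e = e * ((1 : A) ⊗ₜ[K] a) := by
  obtain ⟨u, hut⟩ := hu
  have hcomm (a : A) : Commute a ↑u⁻¹ := by
    refine Commute.units_inv_right ?_
    rw [Commute, SemiconjBy, hut, ← mul'_tmul_one_mul, ht, mul'_mul_one_tmul]
  refine ⟨((↑u⁻¹ : A) ⊗ₜ[K] (1 : A)) * t, ?_, fun a => ?_⟩
  · rw [mul'_tmul_one_mul, ← hut, Units.inv_mul]
  · have hsplit : ((↑u⁻¹ * a) ⊗ₜ[K] (1 : A)) = ((↑u⁻¹ : A) ⊗ₜ[K] (1 : A)) * (a ⊗ₜ[K] 1) := by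
      rw [Algebra.TensorProduct.tmul_mul_tmul, mul_one]
    rw [← mul_assoc, Algebra.TensorProduct.tmul_mul_tmul, mul_one, (hcomm a).eq, hsplit,
      mul_assoc, ht, mul_assoc]

end Separability

section TraceCasimir

variable (K A : Type*) [Field K] [Ring A] [Algebra K A]

noncomputable def leftTraceForm : LinearMap.BilinForm K A :=
  (mul K A).compr₂ (trace K A ∘ₗ mul K A)

variable {K A}

theorem leftTraceForm_apply (x y : A) :
    leftTraceForm K A x y = trace K A (mulLeft K (x * y)) := rfl

theorem leftTraceForm_mul_left (a x y : A) :
    leftTraceForm K A (a * x) y = leftTraceForm K A x (y * a) := by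
  rw [leftTraceForm_apply, leftTraceForm_apply, mul_assoc, trace_mulLeft_mul_comm, mul_assoc]

variable [FiniteDimensional K A] [CharZero K] [IsSemisimpleRing A]

theorem leftTraceForm_nondegenerate : (leftTraceForm K A).Nondegenerate :=
  ⟨fun _ hx => eq_zero_of_forall_trace_mulLeft_mul_eq_zero hx,
    fun _ hy => eq_zero_of_forall_trace_mulLeft_mul_eq_zero fun x => by
      rw [trace_mulLeft_mul_comm]; exact hy x⟩

variable {ι : Type*} [Fintype ι] [DecidableEq ι] (b : Module.Basis ι K A)

theorem trace_mulLeft_mul'_casimir_mul (x : A) :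
    trace K A (mulLeft K (mul' K A (casimir leftTraceForm_nondegenerate b) * x))
      = trace K A (mulRight K x) := by
  have hlin : ∀ s : A, trace K A (mulLeft K s) = (trace K A ∘ₗ mul K A) s := fun _ => rfl
  rw [trace_eq_matrix_trace K b (mulRight K x), Matrix.trace, casimir, map_sum, Finset.sum_mul,
    hlin, map_sum]
  refine Finset.sum_congr rfl fun i _ => ?_
  rw [mul'_apply, ← hlin, mul_assoc, ← leftTraceForm_apply, ← b.repr_eq_apply_dualBasis,
    Matrix.diag_apply, toMatrix_apply, mulRight_apply]

theorem isUnit_mul'_casimir : IsUnit (mul' K A (casimir leftTraceForm_nondegenerate b)) := by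
  set z := mul' K A (casimir leftTraceForm_nondegenerate b)
  have hinj : Function.Injective (mulLeft K z) := by
    rw [← ker_eq_bot, ker_eq_bot']
    intro x hx
    rw [mulLeft_apply] at hx
    refine eq_zero_of_forall_trace_mulRight_mul_eq_zero (K := K) fun y => ?_
    rw [← trace_mulLeft_mul'_casimir_mul b, ← mul_assoc, hx, zero_mul,
      mulLeft_zero_eq_zero, map_zero]
  exact IsUnit.isUnit_iff_mulLeft_bijective.mpr ⟨hinj, injective_iff_surjective.mp hinj⟩

variable (K A) in
theorem exists_separabilityIdempotent :
    ∃ e : A ⊗[K] A, mul' K A e = 1 ∧ ∀ a : A, (a ⊗ₜ[K] (1 : A)) * e = e * ((1 : A) ⊗ₜ[K] a) :=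
  exists_separabilityIdempotent_of_isUnit_mul'
    (tmul_one_mul_casimir leftTraceForm_nondegenerate _ leftTraceForm_mul_left)
    (isUnit_mul'_casimir (Module.finBasis K A))

end TraceCasimir

section GradedTensor

open DirectSum GradedAlgebra

variable {K G A : Type*} [CommRing K] [AddCommGroup G] [DecidableEq G]
variable [Ring A] [Algebra K A] (𝒜 : G → Submodule K A) [GradedAlgebra 𝒜]

theorem GradedAlgebra.proj_mem (g : G) (a : A) : proj 𝒜 g a ∈ 𝒜 g :=
  (decompose 𝒜 a g).2

theorem GradedAlgebra.proj_mul_of_mem_left {a : A} {c : G} (ha : a ∈ 𝒜 c) (g : G) (x : A) :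
    proj 𝒜 (c + g) (a * x) = a * proj 𝒜 g x :=
  coe_decompose_mul_add_of_left_mem 𝒜 ha

theorem GradedAlgebra.proj_mul_of_mem_right {a : A} {c : G} (ha : a ∈ 𝒜 c) (g : G) (x : A) :
    proj 𝒜 (g + c) (x * a) = proj 𝒜 g x * a :=
  coe_decompose_mul_add_of_right_mem 𝒜 ha

variable [Fintype G]

theorem GradedAlgebra.sum_proj (a : A) : ∑ g, proj 𝒜 g a = a := by
  conv_rhs => rw [← (decompose 𝒜).symm_apply_apply a, ← sum_univ_of (decompose 𝒜 a)]
  simp [decompose_symm_sum, decompose_symm_of]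

noncomputable def tensorProj (d : G) : A ⊗[K] A →ₗ[K] A ⊗[K] A :=
  ∑ g, TensorProduct.map (proj 𝒜 g) (proj 𝒜 (d - g))

theorem tensorProj_tmul (d : G) (x y : A) :
    tensorProj 𝒜 d (x ⊗ₜ y) = ∑ g, proj 𝒜 g x ⊗ₜ proj 𝒜 (d - g) y := by
  simp [tensorProj]

theorem mul'_tensorProj (d : G) (t : A ⊗[K] A) :
    mul' K A (tensorProj 𝒜 d t) = proj 𝒜 d (mul' K A t) := by
  induction t using TensorProduct.induction_on with
  | zero => simp
  | add u v hu hv => rw [map_add, map_add, hu, hv, map_add, map_add]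
  | tmul x y =>
    rw [tensorProj_tmul, map_sum, mul'_apply]
    conv_rhs => rw [← sum_proj 𝒜 x, Finset.sum_mul, map_sum]
    refine Finset.sum_congr rfl fun g _ => ?_
    rw [mul'_apply, ← proj_mul_of_mem_left 𝒜 (proj_mem 𝒜 g x), add_sub_cancel]

theorem tmul_one_mul_tensorProj {a : A} {c : G} (ha : a ∈ 𝒜 c) (d : G) (t : A ⊗[K] A) :
    (a ⊗ₜ[K] (1 : A)) * tensorProj 𝒜 d t = tensorProj 𝒜 (c + d) ((a ⊗ₜ[K] (1 : A)) * t) := by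
  induction t using TensorProduct.induction_on with
  | zero => simp
  | add u v hu hv => rw [map_add, mul_add, hu, hv, mul_add, map_add]
  | tmul x y =>
    rw [Algebra.TensorProduct.tmul_mul_tmul, one_mul, tensorProj_tmul, tensorProj_tmul,
      Finset.mul_sum]
    conv_rhs => rw [← Equiv.sum_comp (Equiv.addLeft c)]
    refine Finset.sum_congr rfl fun g _ => ?_
    rw [Algebra.TensorProduct.tmul_mul_tmul, one_mul, Equiv.coe_addLeft,
      proj_mul_of_mem_left 𝒜 ha, add_sub_add_left_eq_sub]

theorem tensorProj_mul_one_tmul {a : A} {c : G} (ha : a ∈ 𝒜 c) (d : G) (t : A ⊗[K] A) :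
    tensorProj 𝒜 d t * ((1 : A) ⊗ₜ[K] a) = tensorProj 𝒜 (c + d) (t * ((1 : A) ⊗ₜ[K] a)) := by
  induction t using TensorProduct.induction_on with
  | zero => simp
  | add u v hu hv => rw [map_add, add_mul, hu, hv, add_mul, map_add]
  | tmul x y =>
    rw [Algebra.TensorProduct.tmul_mul_tmul, mul_one, tensorProj_tmul, tensorProj_tmul,
      Finset.sum_mul]
    refine Finset.sum_congr rfl fun g _ => ?_
    rw [Algebra.TensorProduct.tmul_mul_tmul, mul_one, ← proj_mul_of_mem_right 𝒜 ha,
      sub_add_eq_add_sub, add_comm c]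

theorem tensorProj_zero_tmul_one_mul {t : A ⊗[K] A}
    (ht : ∀ a : A, (a ⊗ₜ[K] (1 : A)) * t = t * ((1 : A) ⊗ₜ[K] a)) (a : A) :
    (a ⊗ₜ[K] (1 : A)) * tensorProj 𝒜 0 t = tensorProj 𝒜 0 t * ((1 : A) ⊗ₜ[K] a) := by
  rw [← sum_proj 𝒜 a, TensorProduct.sum_tmul, TensorProduct.tmul_sum, Finset.sum_mul,
    Finset.mul_sum]
  refine Finset.sum_congr rfl fun c _ => ?_
  rw [tmul_one_mul_tensorProj 𝒜 (proj_mem 𝒜 c a), tensorProj_mul_one_tmul 𝒜 (proj_mem 𝒜 c a), ht]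

theorem tensorProj_zero_mem_iSup (t : A ⊗[K] A) :
    tensorProj 𝒜 0 t ∈
      ⨆ g : G, LinearMap.range (TensorProduct.map (𝒜 g).subtype (𝒜 (-g)).subtype) := by
  rw [tensorProj, LinearMap.sum_apply]
  refine Submodule.sum_mem _ fun g _ => Submodule.mem_iSup_of_mem g ?_
  rw [zero_sub, ← subtype_comp_codRestrict (f := proj 𝒜 g) _ (proj_mem 𝒜 g),
    ← subtype_comp_codRestrict (f := proj 𝒜 (-g)) _ (proj_mem 𝒜 (-g)), TensorProduct.map_comp]
  exact mem_range_self _ _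

end GradedTensor

/-- Let `K` be a field of characteristic 0, `G` a finite abelian group, and `A` a
finite-dimensional semisimple `K`-algebra equipped with a `G`-grading (encoding the
Yetter–Drinfeld structure, i.e. the compatible action and grading, via the combined
`G × G^∨`-grading).  Then the multiplication map `A ⊗_K A → A` admits a bimodule splitting
determined by a separability idempotent `e'` which is homogeneous of degree `0`:
`m(e') = 1`, `a·e' = e'·a` for all `a ∈ A`, and `e' ∈ Σ_g A_g ⊗ A_{-g}`. -/
theorem stmt9 (K : Type*) [Field K] [CharZero K]
    (G : Type*) [AddCommGroup G] [Fintype G] [DecidableEq G]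
    (A : Type*) [Ring A] [Algebra K A] [FiniteDimensional K A] [IsSemisimpleRing A]
    (𝒜 : G → Submodule K A) [GradedAlgebra 𝒜] :
    ∃ e : A ⊗[K] A,
      LinearMap.mul' K A e = 1 ∧
      (∀ a : A,
        (Algebra.TensorProduct.includeLeft : A →ₐ[K] A ⊗[K] A) a * e
          = e * (Algebra.TensorProduct.includeRight : A →ₐ[K] A ⊗[K] A) a) ∧
      e ∈ ⨆ g : G, LinearMap.range (TensorProduct.map (𝒜 g).subtype (𝒜 (-g)).subtype) := by
  obtain ⟨e, he_mul, he_comm⟩ := exists_separabilityIdempotent K A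
  refine ⟨tensorProj 𝒜 0 e, ?_, tensorProj_zero_tmul_one_mul 𝒜 he_comm,
    tensorProj_zero_mem_iSup 𝒜 e⟩
  rw [mul'_tensorProj, he_mul, GradedAlgebra.proj_apply,
    DirectSum.decompose_of_mem_same 𝒜 SetLike.GradedOne.one_mem]
end

section
/- Let ζ be a primitive n-th root of unity, m ∣ n, q = ζ^{n/m}, and let Q be the algebra over K = ℂ(u,v) generated by c, w with c^n = u, w^n = v, cw = ζwc. Let g act by g(c) = qc and g(w) = ζw. If f = Σ_{i=0}^{m−1} f(i)·c^i·w^{(n/m)(m−i)} with coefficients f(i) ∈ K(c^m) is a g-invariant element, and the skew derivation x(a) = ca − (g·a)c annihilates f, then f = f(0), i.e., f lies in K(c^m). -/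
/-! Since `f` is `g`-invariant, `x(f) = cf - fc`. Moving `c` past `w^k` costs a factor `ζ⁻ᵏ`,
so `x(f) = Σᵢ (1 - ζ^{-kᵢ}) f(i) c^{i+1} w^{kᵢ}` with `kᵢ = (n/m)(m-i)`. By independence of these
monomials every coefficient vanishes, and for `1 ≤ i < m` we have `0 < kᵢ < n`, so `ζ^{-kᵢ} ≠ 1`
by primitivity and hence `f(i) = 0`. -/

theorem pow_mul_eq_smul_mul_pow {R A : Type*} [CommSemiring R] [Semiring A] [Algebra R A]
    {c w : A} {s : R} (hwc : w * c = s • (c * w)) (k : ℕ) :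
    w ^ k * c = s ^ k • (c * w ^ k) := by
  induction k with
  | zero => simp
  | succ k ih =>
    rw [pow_succ, mul_assoc, hwc, mul_smul_comm, ← mul_assoc, ih, smul_mul_assoc, smul_smul,
      mul_assoc, ← pow_succ, ← pow_succ']

theorem mul_sum_sub_sum_mul_eq_sum {R A : Type*} [CommRing R] [Ring A] [Algebra R A]
    {c w : A} {s : R} (hwc : w * c = s • (c * w)) (S : Finset ℕ) (y : ℕ → A)
    (hy : ∀ i, c * y i = y i * c) (k : ℕ → ℕ) :
    c * (∑ i ∈ S, y i * c ^ i * w ^ k i) - (∑ i ∈ S, y i * c ^ i * w ^ k i) * c =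
      ∑ i ∈ S, ((1 - s ^ k i) • y i) * c ^ (i + 1) * w ^ k i := by
  rw [Finset.mul_sum, Finset.sum_mul, ← Finset.sum_sub_distrib]
  refine Finset.sum_congr rfl fun i _ => ?_
  have hleft : c * (y i * c ^ i * w ^ k i) = y i * c ^ (i + 1) * w ^ k i := by
    rw [← mul_assoc, ← mul_assoc, hy, mul_assoc (y i), ← pow_succ']
  have hright : y i * c ^ i * w ^ k i * c = s ^ k i • (y i * c ^ (i + 1) * w ^ k i) := by
    rw [mul_assoc, pow_mul_eq_smul_mul_pow hwc, mul_smul_comm, ← mul_assoc, mul_assoc (y i),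
      ← pow_succ]
  rw [hleft, hright, sub_smul, one_smul, sub_mul, sub_mul, smul_mul_assoc, smul_mul_assoc]

theorem div_mul_sub_pos_and_lt {n m i : ℕ} (hn : 0 < n) (hmn : m ∣ n) (hi : 1 ≤ i)
    (him : i < m) : 0 < n / m * (m - i) ∧ n / m * (m - i) < n := by
  obtain ⟨d, rfl⟩ := hmn
  have hd : 0 < d := Nat.pos_of_mul_pos_left hn
  rw [Nat.mul_div_cancel_left d (by omega)]
  constructor
  · exact Nat.mul_pos hd (by omega)
  · nlinarith [Nat.sub_lt (by omega : 0 < m) hi]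

theorem stmt12_general {A : Type*} [Ring A] [Algebra ℂ A] (n m : ℕ) (hn : 0 < n) (hm : 0 < m)
    (hmn : m ∣ n) (ζ : ℂ) (hζ : IsPrimitiveRoot ζ n)
    (c w : A) (hcw : c * w = ζ • (w * c))
    (g : A →ₐ[ℂ] A)
    (Z : Subalgebra ℂ A) (hZc : ∀ z ∈ Z, c * z = z * c)
    (fc : ℕ → A) (hfc : ∀ i, fc i ∈ Z)
    (f : A) (hf : f = ∑ i ∈ Finset.range m, fc i * c ^ i * w ^ ((n / m) * (m - i)))
    (hginv : g f = f)
    (hxf : c * f - g f * c = 0)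
    (hindep : ∀ y : ℕ → A, (∀ i, y i ∈ Z) →
      (∑ i ∈ Finset.range m, y i * c ^ (i + 1) * w ^ ((n / m) * (m - i))) = 0 →
      ∀ i ∈ Finset.range m, y i = 0) :
    (∀ i : ℕ, 1 ≤ i → i < m → fc i = 0) ∧ f = fc 0 * w ^ ((n / m) * m) := by
  have hwc : w * c = ζ⁻¹ • (c * w) := by
    rw [hcw, smul_smul, inv_mul_cancel₀ (hζ.ne_zero hn.ne'), one_smul]
  rw [hginv, hf, mul_sum_sub_sum_mul_eq_sum hwc _ _ (fun i => hZc _ (hfc i))] at hxf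
  have hcoeff := hindep _ (fun i => Z.smul_mem (hfc i) _) hxf
  have hzero : ∀ i : ℕ, 1 ≤ i → i < m → fc i = 0 := by
    intro i hi him
    obtain ⟨hpos, hlt⟩ := div_mul_sub_pos_and_lt hn hmn hi him
    have hunit : 1 - ζ⁻¹ ^ (n / m * (m - i)) ≠ 0 :=
      sub_ne_zero.mpr (hζ.inv.pow_ne_one_of_pos_of_lt hpos.ne' hlt).symm
    exact (smul_eq_zero_iff_right hunit).mp (hcoeff i (Finset.mem_range.mpr him))
  refine ⟨hzero, ?_⟩
  rw [hf, Finset.sum_eq_single_of_mem 0 (Finset.mem_range.mpr hm)]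
  · simp
  · intro i hi hi0
    rw [hzero i (Nat.one_le_iff_ne_zero.mpr hi0) (Finset.mem_range.mp hi), zero_mul, zero_mul]

/-- Setting of the generalized Taft algebra `T(n,m,0)` acting on the cyclic algebra
`Q(n,m)`: `c, w` satisfy `cw = ζwc`, the grading automorphism `g` acts by `g(c) = qc`
(`q = ζ^{n/m}`), `g(w) = ζw`, and `Z` plays the role of the subfield `K(c^m)` (its elements
commute with `c` and are `g`-invariant).  If `f = Σ_{i<m} f(i)·cⁱ·w^{(n/m)(m−i)}` with
coefficients `f(i) ∈ Z` is `g`-invariant and annihilated by the skew derivation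
`x(a) = ca − g(a)c`, then (given the linear independence of the relevant monomials over
`Z`) all coefficients `f(i)` with `i ≥ 1` vanish, i.e. `f = f(0)·w^{(n/m)·m}` lies in
`K(c^m)`. -/
theorem stmt12 {A : Type*} [Ring A] [Algebra ℂ A] (n m : ℕ) (hn : 0 < n) (hm : 0 < m)
    (hmn : m ∣ n) (ζ : ℂ) (hζ : IsPrimitiveRoot ζ n) (q : ℂ) (hq : q = ζ ^ (n / m))
    (c w : A) (hcw : c * w = ζ • (w * c))
    (g : A →ₐ[ℂ] A) (hgc : g c = q • c) (hgw : g w = ζ • w)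
    (Z : Subalgebra ℂ A) (hZc : ∀ z ∈ Z, c * z = z * c) (hZg : ∀ z ∈ Z, g z = z)
    (fc : ℕ → A) (hfc : ∀ i, fc i ∈ Z)
    (f : A) (hf : f = ∑ i ∈ Finset.range m, fc i * c ^ i * w ^ ((n / m) * (m - i)))
    (hginv : g f = f)
    (hxf : c * f - g f * c = 0)
    (hindep : ∀ y : ℕ → A, (∀ i, y i ∈ Z) →
      (∑ i ∈ Finset.range m, y i * c ^ (i + 1) * w ^ ((n / m) * (m - i))) = 0 →
      ∀ i ∈ Finset.range m, y i = 0) :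
    (∀ i : ℕ, 1 ≤ i → i < m → fc i = 0) ∧ f = fc 0 * w ^ ((n / m) * m) :=
  stmt12_general n m hn hm hmn ζ hζ c w hcw g Z hZc fc hfc f hf hginv hxf hindep
end

section
/- Let H be a finite-dimensional pointed Hopf algebra with group of grouplikes G, and let π: H → K be a surjective Hopf algebra map to a Hopf algebra K. If π is injective on the first term F₁H of the coradical filtration of H, then π is injective (hence an isomorphism). -/
/-!
Dualise: `H^*` is an algebra under convolution, and `X^⊥ Y^⊥ ⊆ (X ∧ Y)^⊥` gives
`W^(n+1) ⊆ (F n)^⊥` for `W = (F₀)^⊥`, so `W` is nilpotent because the filtration is exhaustive.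
In finite dimension that inclusion is an equality, whence `W² = (F₁)^⊥ ⊆ W`. Injectivity of `π`
on `F₁` says that the image `B` of the algebra map `π^*` satisfies `B + (F₁)^⊥ = H^*`. Then
`B + W² = H^*` propagates to `B + W^n = H^*` for all `n`, and nilpotency forces `B = H^*`: `π^*`
is onto, so `π` is injective.
-/

open scoped TensorProduct RingTheory.LinearMap
open WithConv

section Subalgebra
variable {R A : Type*} [CommRing R] [Ring A] [Algebra R A]

theorem Subalgebra.toSubmodule_sup_pow_eq_top (B : Subalgebra R A) {W : Submodule R A}
    (hW : W * W ≤ W) (h : Subalgebra.toSubmodule B ⊔ W ^ 2 = ⊤) (n : ℕ) :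
    Subalgebra.toSubmodule B ⊔ W ^ (n + 1) = ⊤ := by
  set B' := Subalgebra.toSubmodule B
  have hsq : W ^ 2 ≤ W := (pow_two W).trans_le hW
  have hW' : W = B' ⊓ W ⊔ W ^ 2 := calc
    W = (W ^ 2 ⊔ B') ⊓ W := by rw [sup_comm, h, top_inf_eq]
    _ = W ^ 2 ⊔ B' ⊓ W := sup_inf_assoc_of_le _ hsq
    _ = B' ⊓ W ⊔ W ^ 2 := sup_comm _ _
  induction n with
  | zero => exact top_le_iff.mp (h ▸ sup_le_sup_left (by simpa using hsq) _)
  | succ n ih =>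
    have hBW : (B' ⊓ W) * W ^ n ≤ B' ⊔ W ^ (n + 2) := calc
      (B' ⊓ W) * W ^ n ≤ (B' ⊓ W) * (B' ⊔ W ^ (n + 1)) := mul_le_mul_right (ih ▸ le_top) _
      _ = (B' ⊓ W) * B' ⊔ (B' ⊓ W) * W ^ (n + 1) := Submodule.mul_sup _ _ _
      _ ≤ B' * B' ⊔ W * W ^ (n + 1) :=
          sup_le_sup (mul_le_mul_left inf_le_left _) (mul_le_mul_left inf_le_right _)
      _ ≤ B' ⊔ W ^ (n + 2) :=
          sup_le_sup B.isIdempotentElem_toSubmodule.eq.le (pow_succ' W (n + 1)).ge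
    refine top_le_iff.mp (ih ▸ sup_le le_sup_left ?_)
    calc W ^ (n + 1) = (B' ⊓ W ⊔ W ^ 2) * W ^ n := by rw [← hW', pow_succ']
      _ = (B' ⊓ W) * W ^ n ⊔ W ^ (n + 2) := by rw [Submodule.sup_mul, ← pow_add, add_comm]
      _ ≤ B' ⊔ W ^ (n + 2) := sup_le hBW le_sup_right

theorem Subalgebra.eq_top_of_sup_sq_eq_top (B : Subalgebra R A) {W : Submodule R A}
    (hW : W * W ≤ W) (hnil : IsNilpotent W) (h : Subalgebra.toSubmodule B ⊔ W ^ 2 = ⊤) :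
    B = ⊤ := by
  obtain ⟨n, hn⟩ := hnil
  have := B.toSubmodule_sup_pow_eq_top hW h n
  rw [pow_succ, hn, zero_mul, Submodule.zero_eq_bot, sup_bot_eq] at this
  exact Subalgebra.toSubmodule_injective (this.trans Algebra.top_toSubmodule.symm)

end Subalgebra

section CoalgHom
variable {R A C D : Type*} [CommSemiring R] [Semiring A] [Algebra R A]
  [AddCommMonoid C] [Module R C] [Coalgebra R C] [AddCommMonoid D] [Module R D] [Coalgebra R D]

noncomputable def CoalgHom.convPrecomp (π : C →ₗc[R] D) :
    WithConv (D →ₗ[R] A) →ₐ[R] WithConv (C →ₗ[R] A) where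
  toFun f := toConv (f.ofConv ∘ₗ π.toLinearMap)
  map_one' := by ext; simp
  map_mul' f g := WithConv.ext (LinearMap.convMul_comp_coalgHom_distrib f g π)
  map_zero' := rfl
  map_add' _ _ := rfl
  commutes' r := by ext; simp

end CoalgHom

namespace Coalgebra

section Module
variable {R C : Type*} [CommSemiring R] [AddCommMonoid C] [Module R C]

def convAnnihilator (X : Submodule R C) : Submodule R (WithConv (C →ₗ[R] R)) :=
  X.dualAnnihilator.comap (WithConv.linearEquiv R (C →ₗ[R] R)).toLinearMap

theorem mem_convAnnihilator {X : Submodule R C} {f : WithConv (C →ₗ[R] R)} :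
    f ∈ convAnnihilator X ↔ ∀ x ∈ X, f x = 0 :=
  Submodule.mem_dualAnnihilator _

theorem convAnnihilator_anti : Antitone (convAnnihilator (R := R) (C := C)) :=
  fun _ _ h => Submodule.comap_mono (Submodule.dualAnnihilator_anti h)

theorem convAnnihilator_top : convAnnihilator (⊤ : Submodule R C) = ⊥ := by
  rw [convAnnihilator, Submodule.dualAnnihilator_top, Submodule.comap_bot, LinearEquiv.ker]

end Module

section CommSemiring
variable {R C : Type*} [CommSemiring R] [AddCommMonoid C] [Module R C] [Coalgebra R C]

variable (R) in
def wedge (X Y : Submodule R C) : Submodule R C :=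
  (LinearMap.range (TensorProduct.mapIncl X ⊤) ⊔ LinearMap.range (TensorProduct.mapIncl ⊤ Y)).comap
    comul

theorem mem_wedge {X Y : Submodule R C} {x : C} :
    x ∈ wedge R X Y ↔ comul x ∈
      LinearMap.range (TensorProduct.mapIncl X ⊤) ⊔ LinearMap.range (TensorProduct.mapIncl ⊤ Y) :=
  Iff.rfl

theorem wedge_mono_right (X : Submodule R C) : Monotone (wedge R X) :=
  fun _ _ h => Submodule.comap_mono (sup_le_sup_left (TensorProduct.range_mapIncl_mono le_rfl h) _)

theorem span_le_wedge_span {S : Set C} (hS : ∀ a ∈ S, comul (R := R) a = a ⊗ₜ a)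
    (Y : Submodule R C) : Submodule.span R S ≤ wedge R (Submodule.span R S) Y := by
  refine Submodule.span_le.mpr fun a ha => mem_wedge.mpr (Submodule.mem_sup_left ?_)
  exact ⟨⟨a, Submodule.subset_span ha⟩ ⊗ₜ ⟨a, Submodule.mem_top⟩, by simp [hS a ha]⟩

theorem convAnnihilator_mul_le (X Y : Submodule R C) :
    convAnnihilator X * convAnnihilator Y ≤ convAnnihilator (wedge R X Y) := by
  refine Submodule.mul_le.mpr fun f hf g hg => mem_convAnnihilator.mpr fun x hx => ?_
  suffices LinearMap.range (TensorProduct.mapIncl X ⊤) ⊔ LinearMap.range (TensorProduct.mapIncl ⊤ Y)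
      ≤ LinearMap.ker (LinearMap.mul' R R ∘ₗ (f.ofConv ⊗ₘ g.ofConv)) from this hx
  have hf : f.ofConv ∘ₗ X.subtype = 0 := LinearMap.ext fun x => mem_convAnnihilator.mp hf x x.2
  have hg : g.ofConv ∘ₗ Y.subtype = 0 := LinearMap.ext fun y => mem_convAnnihilator.mp hg y y.2
  refine sup_le ?_ ?_ <;>
    rw [LinearMap.range_le_ker_iff, LinearMap.comp_assoc, ← TensorProduct.map_comp]
  · rw [hf, TensorProduct.map_zero_left, LinearMap.comp_zero]
  · rw [hg, TensorProduct.map_zero_right, LinearMap.comp_zero]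

section Filtration
variable {F : ℕ → Submodule R C}

theorem monotone_of_eq_wedge (hF : ∀ n, F (n + 1) = wedge R (F 0) (F n)) (h01 : F 0 ≤ F 1) :
    Monotone F := by
  refine monotone_nat_of_le_succ fun n => ?_
  induction n with
  | zero => exact h01
  | succ n ih => exact (hF n).trans_le ((wedge_mono_right _ ih).trans_eq (hF (n + 1)).symm)

theorem convAnnihilator_pow_le_of_eq_wedge (hF : ∀ n, F (n + 1) = wedge R (F 0) (F n)) (n : ℕ) :
    convAnnihilator (F 0) ^ (n + 1) ≤ convAnnihilator (F n) := by
  induction n with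
  | zero => exact (pow_one (convAnnihilator (F 0))).le
  | succ n ih =>
    calc convAnnihilator (F 0) ^ (n + 1 + 1)
        = convAnnihilator (F 0) * convAnnihilator (F 0) ^ (n + 1) :=
          pow_succ' (convAnnihilator (F 0)) (n + 1)
      _ ≤ convAnnihilator (F 0) * convAnnihilator (F n) := mul_le_mul_right ih _
      _ ≤ convAnnihilator (F (n + 1)) := hF n ▸ convAnnihilator_mul_le _ _

end Filtration

end CommSemiring

section CommRing
variable {R C : Type*} [CommRing R] [AddCommGroup C] [Module R C] [Coalgebra R C]

theorem ker_map_comp_comul_le_wedge {X Y : Submodule R C} {p q : C →ₗ[R] C}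
    (hp : LinearMap.range (LinearMap.id - p) ≤ X) (hq : LinearMap.range (LinearMap.id - q) ≤ Y) :
    LinearMap.ker ((p ⊗ₘ q) ∘ₗ comul) ≤ wedge R X Y := by
  intro x hx
  have hdecomp : (LinearMap.id - p) ⊗ₘ LinearMap.id + p ⊗ₘ (LinearMap.id - q) + p ⊗ₘ q =
      (LinearMap.id : C ⊗[R] C →ₗ[R] C ⊗[R] C) := by
    rw [add_assoc, ← TensorProduct.map_add_right, sub_add_cancel, ← TensorProduct.map_add_left,
      sub_add_cancel, TensorProduct.map_id]
  have hΔ := LinearMap.congr_fun hdecomp (comul x)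
  simp only [LinearMap.add_apply, LinearMap.id_apply] at hΔ
  have hx : (p ⊗ₘ q) (comul x) = 0 := hx
  rw [mem_wedge, ← hΔ, hx, add_zero]
  refine add_mem
    (Submodule.mem_sup_left (TensorProduct.range_map_mono ?_ ?_ (LinearMap.mem_range_self _ _)))
    (Submodule.mem_sup_right (TensorProduct.range_map_mono ?_ ?_ (LinearMap.mem_range_self _ _)))
    <;> simp [hp, hq]

end CommRing

end Coalgebra

section Field
variable {K C D : Type*} [Field K] [AddCommGroup C] [Module K C] [Coalgebra K C]
  [AddCommGroup D] [Module K D] [Coalgebra K D]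

namespace Coalgebra

theorem toConv_comp_map_comp_comul_mem_mul [FiniteDimensional K C] {X Y : Submodule K C}
    {p q : C →ₗ[K] C} (hp : X ≤ LinearMap.ker p) (hq : Y ≤ LinearMap.ker q)
    (φ : Module.Dual K (C ⊗[K] C)) :
    toConv (φ ∘ₗ (p ⊗ₘ q) ∘ₗ comul) ∈ convAnnihilator X * convAnnihilator Y := by
  rw [← (TensorProduct.dualDistribEquiv K C C).apply_symm_apply φ]
  induction (TensorProduct.dualDistribEquiv K C C).symm φ using TensorProduct.induction_on with
  | zero => simp
  | tmul g g' =>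
    have : toConv (TensorProduct.dualDistribEquiv K C C (g ⊗ₜ g') ∘ₗ (p ⊗ₘ q) ∘ₗ comul) =
        toConv (g ∘ₗ p) * toConv (g' ∘ₗ q) := by
      ext x
      simp only [LinearMap.comp_apply, LinearMap.convMul_apply, TensorProduct.map_comp]
      induction (p ⊗ₘ q) (comul x) using TensorProduct.induction_on with
      | zero => simp
      | tmul a b => simp
      | add a b ha hb => simp only [map_add, ha, hb]
    rw [this]
    refine Submodule.mul_mem_mul (mem_convAnnihilator.mpr fun x hx => ?_)
      (mem_convAnnihilator.mpr fun y hy => ?_)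
    · simp [LinearMap.mem_ker.mp (hp hx)]
    · simp [LinearMap.mem_ker.mp (hq hy)]
  | add u v hu hv => simpa [LinearMap.add_comp] using add_mem hu hv

theorem convAnnihilator_wedge_le [FiniteDimensional K C] (X Y : Submodule K C) :
    convAnnihilator (wedge K X Y) ≤ convAnnihilator X * convAnnihilator Y := by
  obtain ⟨r, hr⟩ := X.subtype.exists_leftInverse_of_injective X.ker_subtype
  obtain ⟨s, hs⟩ := Y.subtype.exists_leftInverse_of_injective Y.ker_subtype
  have hp : X ≤ LinearMap.ker (LinearMap.id - X.subtype ∘ₗ r) := fun x hx => by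
    simp [show r x = ⟨x, hx⟩ from LinearMap.congr_fun hr ⟨x, hx⟩]
  have hq : Y ≤ LinearMap.ker (LinearMap.id - Y.subtype ∘ₗ s) := fun y hy => by
    simp [show s y = ⟨y, hy⟩ from LinearMap.congr_fun hs ⟨y, hy⟩]
  intro f hf
  obtain ⟨φ, hφ⟩ : f.ofConv ∈ LinearMap.range
      (((LinearMap.id - X.subtype ∘ₗ r) ⊗ₘ (LinearMap.id - Y.subtype ∘ₗ s)) ∘ₗ comul).dualMap := by
    rw [LinearMap.range_dualMap_eq_dualAnnihilator_ker]
    refine Submodule.dualAnnihilator_anti (ker_map_comp_comul_le_wedge ?_ ?_) hf <;>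
      rw [sub_sub_cancel] <;>
      exact (LinearMap.range_comp_le_range _ _).trans_eq (Submodule.range_subtype _)
  rw [← toConv_ofConv f, ← hφ]
  exact toConv_comp_map_comp_comul_mem_mul hp hq φ

theorem convAnnihilator_wedge [FiniteDimensional K C] (X Y : Submodule K C) :
    convAnnihilator (wedge K X Y) = convAnnihilator X * convAnnihilator Y :=
  (convAnnihilator_wedge_le X Y).antisymm (convAnnihilator_mul_le X Y)

end Coalgebra

open Coalgebra

theorem CoalgHom.range_convPrecomp_sup_convAnnihilator (π : C →ₗc[K] D) {X : Submodule K C}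
    (hX : Disjoint (LinearMap.ker π.toLinearMap) X) :
    Subalgebra.toSubmodule (π.convPrecomp (A := K)).range ⊔ convAnnihilator X = ⊤ := by
  have h : LinearMap.range π.toLinearMap.dualMap ⊔ X.dualAnnihilator = ⊤ := by
    rw [LinearMap.range_dualMap_eq_dualAnnihilator_ker, ← Subspace.dualAnnihilator_inf_eq,
      hX.eq_bot, Submodule.dualAnnihilator_bot]
  refine eq_top_iff.mpr fun f _ => ?_
  obtain ⟨_, ⟨ψ, rfl⟩, g, hg, hf⟩ := Submodule.mem_sup.mp (h ▸ Submodule.mem_top : f.ofConv ∈ _)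
  rw [← toConv_ofConv f, ← hf, toConv_add]
  exact Submodule.add_mem_sup ⟨toConv ψ, rfl⟩ hg

theorem CoalgHom.injective_of_range_convPrecomp_eq_top (π : C →ₗc[K] D)
    (h : (π.convPrecomp (A := K)).range = ⊤) : Function.Injective π := by
  refine (injective_iff_map_eq_zero π).mpr fun z hz => ?_
  refine (Module.forall_dual_apply_eq_zero_iff K z).mp fun φ => ?_
  obtain ⟨ψ, hψ⟩ := h ▸ Algebra.mem_top (x := toConv φ)
  calc φ z = ψ (π z) := congr(($hψ).ofConv z).symm
    _ = 0 := by rw [hz, map_zero]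

end Field

theorem stmt15_general (H K : Type*) [Ring H] [HopfAlgebra ℂ H] [FiniteDimensional ℂ H]
    [Ring K] [HopfAlgebra ℂ K]
    (F : ℕ → Submodule ℂ H)
    (hF0 : F 0 = Submodule.span ℂ
      {a : H | Coalgebra.comul (R := ℂ) a = a ⊗ₜ[ℂ] a ∧ Coalgebra.counit (R := ℂ) a = 1})
    (hFsucc : ∀ n : ℕ, F (n + 1)
      = Submodule.comap (Coalgebra.comul (R := ℂ) (A := H))
          (LinearMap.range (TensorProduct.map (F 0).subtype (⊤ : Submodule ℂ H).subtype)
            ⊔ LinearMap.range (TensorProduct.map (⊤ : Submodule ℂ H).subtype (F n).subtype)))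
    (hexh : ⨆ n, F n = ⊤)
    (π : H →ₐc[ℂ] K)
    (hinj1 : ∀ x ∈ F 1, π x = 0 → x = 0) :
    Function.Injective π := by
  have hF : ∀ n, F (n + 1) = Coalgebra.wedge ℂ (F 0) (F n) := hFsucc
  have hF01 : F 0 ≤ F 1 := by
    rw [hF 0, hF0]
    exact Coalgebra.span_le_wedge_span (fun a ha => ha.1) _
  set W := Coalgebra.convAnnihilator (F 0)
  obtain ⟨N, hN⟩ : ∃ N, F N = ⊤ := ⟨_, (WellFoundedGT.iSup_eq_monotonicSequenceLimit
    ⟨F, Coalgebra.monotone_of_eq_wedge hF hF01⟩).symm.trans hexh⟩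
  have hnil : IsNilpotent W := ⟨N + 1, by
    have := Coalgebra.convAnnihilator_pow_le_of_eq_wedge hF N
    rwa [hN, Coalgebra.convAnnihilator_top, le_bot_iff, ← Submodule.zero_eq_bot] at this⟩
  have hsq : W ^ 2 = Coalgebra.convAnnihilator (F 1) :=
    (pow_two W).trans (by rw [hF 0, Coalgebra.convAnnihilator_wedge])
  have hW : W * W ≤ W := (pow_two W ▸ hsq).trans_le (Coalgebra.convAnnihilator_anti hF01)
  have hdisj : Disjoint (LinearMap.ker π.toCoalgHom.toLinearMap) (F 1) :=
    Submodule.disjoint_def.mpr fun x hker h1 => hinj1 x h1 hker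
  refine π.toCoalgHom.injective_of_range_convPrecomp_eq_top
    (Subalgebra.eq_top_of_sup_sq_eq_top _ hW hnil ?_)
  rw [hsq]
  exact π.toCoalgHom.range_convPrecomp_sup_convAnnihilator hdisj

/-- Heyneman–Radford criterion for pointed Hopf algebras: let `H` be a finite-dimensional
pointed Hopf algebra over `ℂ` with coradical filtration `F`, so that `F 0` is the span of
the grouplike elements (pointedness), each `F (n+1)` is the wedge
`Δ⁻¹(F 0 ⊗ H + H ⊗ F n)`, and the filtration is exhaustive.  If a surjective Hopf algebra
map `π : H → K` is injective on `F 1`, then `π` is injective (hence an isomorphism). -/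
theorem stmt15 (H K : Type*) [Ring H] [HopfAlgebra ℂ H] [FiniteDimensional ℂ H]
    [Ring K] [HopfAlgebra ℂ K]
    (F : ℕ → Submodule ℂ H)
    (hF0 : F 0 = Submodule.span ℂ
      {a : H | Coalgebra.comul (R := ℂ) a = a ⊗ₜ[ℂ] a ∧ Coalgebra.counit (R := ℂ) a = 1})
    (hFsucc : ∀ n : ℕ, F (n + 1)
      = Submodule.comap (Coalgebra.comul (R := ℂ) (A := H))
          (LinearMap.range (TensorProduct.map (F 0).subtype (⊤ : Submodule ℂ H).subtype)
            ⊔ LinearMap.range (TensorProduct.map (⊤ : Submodule ℂ H).subtype (F n).subtype)))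
    (hexh : ⨆ n, F n = ⊤)
    (π : H →ₐc[ℂ] K) (hsurj : Function.Surjective π)
    (hinj1 : ∀ x ∈ F 1, π x = 0 → x = 0) :
    Function.Injective π :=
  stmt15_general H K F hF0 hFsucc hexh π hinj1
end
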